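/- arXiv:1107.0326 — 10 statements merged into one kernel-verified Lean document; each statement's English description precedes it below -/
import Mathlib

section
/- In the Monty Hall game, every pure strategy of Conie that uses the hold action in at least one situation (i.e., is not of the form (x, switch, switch)) is weakly dominated by some always-switching strategy (y, switch, switch). -/
open Finset

/-- Doors are `Fin 3` (door 1 = 0, door 2 = 1, door 3 = 2). -/
abbrev Door := Fin 3

/-- Monte's pure strategy: a pair (θ, d) with prize door θ and offered door d ≠ θ. -/
abbrev MonteStrat := {p : Door × Door // p.2 ≠ p.1}

/-- Conie's pure strategy: (x, a, b); `true` = switch, `false` = hold;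
`a` is the reaction to the smaller alternative door, `b` to the larger. -/
abbrev ConieStrat := Door × Bool × Bool

/-- The smaller of the two doors different from `x`. -/
def smallerAlt (x : Door) : Door := if x = 0 then 1 else 0

/-- The larger of the two doors different from `x`. -/
def largerAlt (x : Door) : Door := if x = 2 then 1 else 2

/-- Conie's action when offered door `y` (≠ her pick). -/
def act (A : ConieStrat) (y : Door) : Bool :=
  if y = smallerAlt A.1 then A.2.1 else A.2.2

/-- Conie wins iff (mismatch and she switches against the offer θ) or
(match and she holds against the offer d). -/
def wins (A : ConieStrat) (M : MonteStrat) : Bool :=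
  if A.1 = M.val.1 then !(act A M.val.2) else act A M.val.1

/-- The 12×6 payoff matrix entry. -/
noncomputable def payoff (A : ConieStrat) (M : MonteStrat) : ℝ :=
  if wins A M then 1 else 0

/-- `B` weakly dominates `A`. -/
def dominates (B A : ConieStrat) : Prop :=
  (∀ M : MonteStrat, wins A M → wins B M) ∧ ∃ M : MonteStrat, wins B M ∧ ¬ wins A M

/-- Winning probability of pure strategy `A` against mixed strategy `Q` of Monte. -/
noncomputable def winProb (A : ConieStrat) (Q : MonteStrat → ℝ) : ℝ :=
  ∑ M : MonteStrat, Q M * payoff A M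

/-- Marginal probability that the prize is behind door `θ` under `Q`. -/
noncomputable def prizeProb (Q : MonteStrat → ℝ) (θ : Door) : ℝ :=
  ∑ M : MonteStrat, if M.val.1 = θ then Q M else 0

/-- Expected payoff of a mixed profile (P, Q). -/
noncomputable def mixedPay (P : ConieStrat → ℝ) (Q : MonteStrat → ℝ) : ℝ :=
  ∑ A : ConieStrat, ∑ M : MonteStrat, P A * payoff A M * Q M

/-- Conie's uniform always-switching mixed strategy. -/
noncomputable def Pstar : ConieStrat → ℝ := fun A => if A.2.1 = true ∧ A.2.2 = true then 1/3 else 0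

/-- every hold-using strategy is weakly dominated by some
always-switching strategy. -/
theorem stmt1 (A : ConieStrat) (h : A.2.1 = false ∨ A.2.2 = false) :
    ∃ y : Door, dominates (y, true, true) A := by revert A h; simp only [dominates]; decide
end

section
/- Unlucky door theorem: for every pure strategy A of Conie in the Monty Hall game there exists a door u ∈ {1,2,3} such that A loses against every Monte strategy (θ, d) with θ = u; consequently, the always-switching strategy (u, switch, switch) weakly dominates A whenever A is not itself always-switching with initial pick achieving the same wins. -/
open Finset

/-- unlucky door theorem: for every Conie strategy there is a door u
such that she loses against every Monte strategy hiding the prize behind u. -/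
theorem stmt2 (A : ConieStrat) :
    ∃ u : Door, ∀ (d : Door) (h : d ≠ u), ¬ wins A ⟨(u, d), h⟩ := by revert A; decide
end

section
/- If Monte hides the prize uniformly at random (each door with probability 1/3), then for every pure strategy A of Conie and every Monte revealing rule, Conie's winning probability is at most 2/3. -/
open Finset

/-- under a uniform prize door, every pure strategy of Conie wins
with probability at most 2/3, for every revealing rule of Monte. -/
theorem stmt3 (A : ConieStrat) (r : Door → Door) (hr : ∀ θ, r θ ≠ θ) :
    (∑ θ : Door, payoff A ⟨(θ, r θ), hr θ⟩) / 3 ≤ 2/3 := by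
  obtain ⟨x, a, b⟩ := A
  have dec : ∀ (x d0 d1 d2 : Door) (a b : Bool), d0 ≠ 0 → d1 ≠ 1 → d2 ≠ 2 →
      (if x = (0:Door) then !(act (x,a,b) d0) else act (x,a,b) 0) = false ∨
      (if x = (1:Door) then !(act (x,a,b) d1) else act (x,a,b) 1) = false ∨
      (if x = (2:Door) then !(act (x,a,b) d2) else act (x,a,b) 2) = false := by decide
  have key := dec x (r 0) (r 1) (r 2) a b (hr 0) (hr 1) (hr 2)
  have e0 : wins (x,a,b) ⟨(0, r 0), hr 0⟩ =
      (if x = (0:Door) then !(act (x,a,b) (r 0)) else act (x,a,b) 0) := rfl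
  have e1 : wins (x,a,b) ⟨(1, r 1), hr 1⟩ =
      (if x = (1:Door) then !(act (x,a,b) (r 1)) else act (x,a,b) 1) := rfl
  have e2 : wins (x,a,b) ⟨(2, r 2), hr 2⟩ =
      (if x = (2:Door) then !(act (x,a,b) (r 2)) else act (x,a,b) 2) := rfl
  have hb : ∀ M : MonteStrat, (0:ℝ) ≤ payoff (x,a,b) M ∧ payoff (x,a,b) M ≤ 1 := by
    intro M; unfold payoff; split <;> norm_num
  rw [Fin.sum_univ_three]
  rcases key with h | h | h
  · have hz : payoff (x,a,b) ⟨(0, r 0), hr 0⟩ = 0 := by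
      unfold payoff; rw [e0.trans h]; simp
    have b1 := hb ⟨(1, r 1), hr 1⟩
    have b2 := hb ⟨(2, r 2), hr 2⟩
    rw [hz]; linarith [b1.1, b1.2, b2.1, b2.2]
  · have hz : payoff (x,a,b) ⟨(1, r 1), hr 1⟩ = 0 := by
      unfold payoff; rw [e1.trans h]; simp
    have b1 := hb ⟨(0, r 0), hr 0⟩
    have b2 := hb ⟨(2, r 2), hr 2⟩
    rw [hz]; linarith [b1.1, b1.2, b2.1, b2.2]
  · have hz : payoff (x,a,b) ⟨(2, r 2), hr 2⟩ = 0 := by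
      unfold payoff; rw [e2.trans h]; simp
    have b1 := hb ⟨(0, r 0), hr 0⟩
    have b2 := hb ⟨(1, r 1), hr 1⟩
    rw [hz]; linarith [b1.1, b1.2, b2.1, b2.2]
end

section
/- Suppose Monte hides the prize behind door θ with probability π_θ where π_1 ≥ π_2 ≥ π_3 > 0, and the revealing biases are arbitrary with all six Monte pure strategies having positive probability. Then the maximum winning probability of Conie over all her pure strategies equals 1 − π_3 = π_1 + π_2, and it is attained by the always-switching strategy picking door 3. -/
open Finset

lemma sum_monte (f : MonteStrat → ℝ) :
    ∑ M : MonteStrat, f M =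
      f ⟨(0,1), by decide⟩ + f ⟨(0,2), by decide⟩ + f ⟨(1,0), by decide⟩ +
      f ⟨(1,2), by decide⟩ + f ⟨(2,0), by decide⟩ + f ⟨(2,1), by decide⟩ := by
  rw [show (Finset.univ : Finset MonteStrat) =
      {⟨(0,1), by decide⟩, ⟨(0,2), by decide⟩, ⟨(1,0), by decide⟩,
       ⟨(1,2), by decide⟩, ⟨(2,0), by decide⟩, ⟨(2,1), by decide⟩} from by decide]
  simp [Finset.sum_insert, Finset.mem_insert]
  ring

/-- fully supported Q with π_1 ≥ π_2 ≥ π_3 (doors 0,1,2):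
maximal winning probability is 1 − π_3 = π_1 + π_2, attained by (door 3, switch, switch). -/
theorem stmt5 (Q : MonteStrat → ℝ) (hpos : ∀ M, 0 < Q M)
    (hsum : ∑ M : MonteStrat, Q M = 1)
    (h12 : prizeProb Q 1 ≤ prizeProb Q 0) (h23 : prizeProb Q 2 ≤ prizeProb Q 1) :
    winProb (2, true, true) Q = 1 - prizeProb Q 2 ∧
    1 - prizeProb Q 2 = prizeProb Q 0 + prizeProb Q 1 ∧
    ∀ A : ConieStrat, winProb A Q ≤ 1 - prizeProb Q 2 := by
  have p01 := hpos ⟨(0,1), by decide⟩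
  have p02 := hpos ⟨(0,2), by decide⟩
  have p10 := hpos ⟨(1,0), by decide⟩
  have p12 := hpos ⟨(1,2), by decide⟩
  have p20 := hpos ⟨(2,0), by decide⟩
  have p21 := hpos ⟨(2,1), by decide⟩
  rw [sum_monte] at hsum
  simp only [prizeProb, sum_monte] at h12 h23 ⊢
  simp only [Fin.reduceEq, if_true, if_false, ite_true, ite_false, add_zero, zero_add] at h12 h23 ⊢
  refine ⟨?_, ?_, ?_⟩
  · simp [winProb, sum_monte, payoff, wins, act, smallerAlt, largerAlt]
    linarith
  · linarith
  · intro A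
    obtain ⟨x, a, b⟩ := A
    fin_cases x <;> cases a <;> cases b <;>
      simp [winProb, sum_monte, payoff, wins, act, smallerAlt, largerAlt] <;> linarith
end

section
/- If Monte's mixed strategy Q is fully supported (every pure strategy (θ, d) has positive probability), then every pure strategy of Conie maximizing her winning probability against Q is an always-switching strategy (x, switch, switch). -/
open Finset

lemma exists_dominates : ∀ A : ConieStrat, ¬ (A.2.1 = true ∧ A.2.2 = true) →
    ∃ B : ConieStrat, dominates B A := by unfold dominates; decide

/-- against a fully supported Q, every best-response pure strategy
is always-switching. -/
theorem stmt6 (Q : MonteStrat → ℝ) (hpos : ∀ M, 0 < Q M)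
    (hsum : ∑ M : MonteStrat, Q M = 1) (A : ConieStrat)
    (hbest : ∀ B : ConieStrat, winProb B Q ≤ winProb A Q) :
    A.2.1 = true ∧ A.2.2 = true := by
  by_contra h
  have hAb : ¬ (A.2.1 = true ∧ A.2.2 = true) := h
  have hdom := exists_dominates A hAb
  obtain ⟨B, hBA, M₀, hBwin, hAlose⟩ := hdom
  have hlt : winProb A Q < winProb B Q := by
    unfold winProb
    apply Finset.sum_lt_sum
    · intro M _
      apply mul_le_mul_of_nonneg_left _ (le_of_lt (hpos M))
      unfold payoff
      by_cases hw : wins A M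
      · simp [hw, hBA M hw]
      · simp [hw]; positivity
    · refine ⟨M₀, Finset.mem_univ _, ?_⟩
      unfold payoff
      simp [hBwin, hAlose, hpos M₀]
  exact absurd (hbest B) (not_le.mpr hlt)
end

section
/- Under the 'crawl' strategy Q = (1/3, 0, 1/3, 0, 1/3, 0) (Monte hides the prize uniformly and always offers the door with smaller number in case of match, equivalently reveals the higher-numbered door), the pure Bayesian (best-response) strategies of Conie are exactly the six strategies (x, switch, switch) and (x, hold, switch) for x ∈ {1,2,3}, each winning with probability 2/3. -/
open Finset

/-!
Under the crawl strategy the prize is uniform and, on a match, the offered door is the smaller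
alternative. If the prize is behind Conie's door she wins iff she holds against the smaller
alternative; if it is behind either other door she wins iff she switches against that door. The
first two events are complementary, so she wins with probability `1/3 + 1/3 · [b = switch]`.
-/

noncomputable def crawl : MonteStrat → ℝ :=
  fun M => if M.val.2 = smallerAlt M.val.1 then (1/3 : ℝ) else 0

lemma smallerAlt_ne (x : Door) : smallerAlt x ≠ x := by
  fin_cases x <;> decide

lemma largerAlt_ne (x : Door) : largerAlt x ≠ x := by
  fin_cases x <;> decide

lemma largerAlt_ne_smallerAlt (x : Door) : largerAlt x ≠ smallerAlt x := by
  fin_cases x <;> decide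

lemma sum_door_eq_add_alts {M : Type*} [AddCommMonoid M] (f : Door → M) (x : Door) :
    ∑ θ, f θ = f x + f (smallerAlt x) + f (largerAlt x) := by
  rw [Fin.sum_univ_three]
  fin_cases x <;> simp [smallerAlt, largerAlt] <;> abel

lemma act_smallerAlt (A : ConieStrat) : act A (smallerAlt A.1) = A.2.1 := by
  simp [act]

lemma act_largerAlt (A : ConieStrat) : act A (largerAlt A.1) = A.2.2 := by
  simp [act, largerAlt_ne_smallerAlt]

def crawlMove (θ : Door) : MonteStrat := ⟨(θ, smallerAlt θ), smallerAlt_ne θ⟩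

lemma crawlMove_injective : Function.Injective crawlMove :=
  fun _ _ h => congrArg (fun M : MonteStrat => M.val.1) h

lemma wins_crawlMove_self (A : ConieStrat) : wins A (crawlMove A.1) = !A.2.1 := by
  simp [wins, crawlMove, act_smallerAlt]

lemma wins_crawlMove_of_ne (A : ConieStrat) {θ : Door} (h : θ ≠ A.1) :
    wins A (crawlMove θ) = act A θ := by
  simp [wins, crawlMove, h.symm]

lemma winProb_crawl_eq_sum (A : ConieStrat) :
    winProb A crawl = ∑ θ, payoff A (crawlMove θ) / 3 := by
  refine (Fintype.sum_of_injective crawlMove crawlMove_injective _ _ ?_ ?_).symm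
  · rintro ⟨⟨θ, d⟩, _⟩ hM
    have hd : d ≠ smallerAlt θ := fun hd => hM ⟨θ, by simp [crawlMove, hd]⟩
    simp [crawl, hd]
  · intro θ
    simp [crawl, crawlMove, div_eq_inv_mul]

lemma winProb_crawl (A : ConieStrat) :
    winProb A crawl = if A.2.2 then 2/3 else 1/3 := by
  rw [winProb_crawl_eq_sum, sum_door_eq_add_alts _ A.1]
  simp only [payoff, wins_crawlMove_self, wins_crawlMove_of_ne A (smallerAlt_ne A.1),
    wins_crawlMove_of_ne A (largerAlt_ne A.1), act_smallerAlt, act_largerAlt]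
  obtain ⟨x, a, b⟩ := A
  cases a <;> cases b <;> norm_num

/-- against the 'crawl' strategy (uniform prize, always offer the
smaller alternative in case of match), the best responses are exactly the
strategies with second action switch, each winning with probability 2/3. -/
theorem stmt7 (Qc : MonteStrat → ℝ)
    (hQc : Qc = fun M => if M.val.2 = smallerAlt M.val.1 then (1/3 : ℝ) else 0)
    (A : ConieStrat) :
    ((∀ B : ConieStrat, winProb B Qc ≤ winProb A Qc) ↔ A.2.2 = true) ∧
    (A.2.2 = true → winProb A Qc = 2/3) := by
  obtain rfl : Qc = crawl := hQc
  simp only [winProb_crawl]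
  refine ⟨⟨fun hbest => ?_, fun hb B => ?_⟩, fun hb => by simp [hb]⟩
  · by_contra hb
    have h := hbest (0, true, true)
    norm_num [hb] at h
  · cases B.2.2 <;> norm_num [hb]
end

section
/- For any probability vector (π_1, π_2, π_3) giving Monte's prize-door distribution, Conie's strategy 'pick the least likely door and always switch' wins with probability 1 − min(π_1, π_2, π_3), regardless of Monte's revealing biases, and no pure strategy of Conie achieves a higher winning probability. -/
open Finset

lemma winProb_le_aux (A : ConieStrat) (Q : MonteStrat → ℝ) (hQ : ∀ M, 0 ≤ Q M)
    (hsum : ∑ M : MonteStrat, Q M = 1) (y : Door)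
    (h : ∀ M : MonteStrat, wins A M = true → M.val.1 ≠ y) :
    winProb A Q ≤ 1 - prizeProb Q y := by
  have hle : winProb A Q ≤ ∑ M : MonteStrat, (Q M - if M.val.1 = y then Q M else 0) := by
    apply Finset.sum_le_sum
    intro M _
    by_cases hw : wins A M
    · have hy := h M hw
      simp [payoff, hw, hy]
    · have hq := hQ M
      rw [payoff, if_neg hw, mul_zero]
      split <;> linarith
  have : ∑ M : MonteStrat, (Q M - if M.val.1 = y then Q M else 0)
      = 1 - prizeProb Q y := by
    rw [Finset.sum_sub_distrib, hsum, prizeProb]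
  linarith

lemma key_door : ∀ A : ConieStrat, ∃ y : Door,
    ∀ M : MonteStrat, wins A M = true → M.val.1 ≠ y := by decide

/-- 'pick the least likely door and always switch' wins with
probability 1 − min π, and no pure strategy does better. -/
theorem stmt12 (Q : MonteStrat → ℝ) (hQ : ∀ M, 0 ≤ Q M)
    (hsum : ∑ M : MonteStrat, Q M = 1) (x : Door)
    (hmin : ∀ θ : Door, prizeProb Q x ≤ prizeProb Q θ) :
    winProb (x, true, true) Q = 1 - prizeProb Q x ∧
    ∀ A : ConieStrat, winProb A Q ≤ 1 - prizeProb Q x := by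
  constructor
  · have h1 : winProb (x, true, true) Q
        = ∑ M : MonteStrat, (Q M - if M.val.1 = x then Q M else 0) := by
      unfold winProb
      apply Finset.sum_congr rfl
      intro M _
      by_cases h : x = M.val.1
      · simp [payoff, wins, act, h]
      · simp [payoff, wins, act, h, Ne.symm h]
    rw [h1, Finset.sum_sub_distrib, hsum, prizeProb]
  · intro A
    obtain ⟨y, hy⟩ := key_door A
    have := winProb_le_aux A Q hQ hsum y hy
    have := hmin y
    linarith
end

section
/- Every pure strategy of Conie that uses the switch action in all situations, i.e., (x, switch, switch), is not weakly dominated by any other pure strategy of Conie in the Monty Hall game. -/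
open Finset

/-- no pure strategy weakly dominates an always-switching strategy. -/
theorem stmt14 (x : Door) (B : ConieStrat) : ¬ dominates B (x, true, true) := by revert x B; unfold dominates; decide
end

section
/- Conie's uniform always-switching mixed strategy P* is equalizing: for every mixed strategy Q of Monte, P* C Qᵀ = 2/3 exactly. -/
open Finset

set_option maxHeartbeats 2000000 in
/-- the uniform always-switching mixed strategy P* is equalizing:
P* C Qᵀ = 2/3 for every mixed strategy Q of Monte. -/
theorem stmt18 (Q : MonteStrat → ℝ) (hQ : ∀ M, 0 ≤ Q M)
    (hsum : ∑ M : MonteStrat, Q M = 1) : mixedPay Pstar Q = 2/3 := by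
  have key : ∀ M : MonteStrat, (∑ A : ConieStrat, Pstar A * payoff A M) = 2/3 := by
    rintro ⟨⟨θ, d⟩, hd⟩
    fin_cases θ <;> fin_cases d <;>
      simp_all [Fintype.sum_prod_type, Fin.sum_univ_succ, Pstar, payoff, wins, act,
        smallerAlt, largerAlt] <;> norm_num
  rw [mixedPay, Finset.sum_comm]
  calc (∑ M : MonteStrat, ∑ A : ConieStrat, Pstar A * payoff A M * Q M)
      = ∑ M : MonteStrat, (2/3) * Q M := by
        refine Finset.sum_congr rfl fun M _ => ?_
        rw [← Finset.sum_mul, key M]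
    _ = 2/3 := by rw [← Finset.mul_sum, hsum, mul_one]
end

section
/- A never-switching strategy (x, hold, hold) is a Bayesian (best-response) strategy against Monte's mixed strategy Q if and only if Q assigns probability 1 to the prize being behind door x; and even in that case every always-switching strategy (x', switch, switch) with x' ≠ x is also a best response. -/
open Finset

lemma prizeProb_nonneg (Q : MonteStrat → ℝ) (hQ : ∀ M, 0 ≤ Q M) (θ : Door) :
    0 ≤ prizeProb Q θ := by
  apply Finset.sum_nonneg
  intro M _
  split
  · exact hQ M
  · exact le_refl 0

lemma sum_prizeProb (Q : MonteStrat → ℝ) (hsum : ∑ M : MonteStrat, Q M = 1) :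
    ∑ θ : Door, prizeProb Q θ = 1 := by
  unfold prizeProb
  rw [Finset.sum_comm]
  simpa using hsum

lemma winProb_hold (Q : MonteStrat → ℝ) (x : Door) :
    winProb (x, false, false) Q = prizeProb Q x := by
  unfold winProb prizeProb
  apply Finset.sum_congr rfl
  intro M _
  rcases eq_or_ne x M.val.1 with h | h
  · simp [payoff, wins, act, h]
  · simp [payoff, wins, act, h, Ne.symm h]

lemma winProb_switch (Q : MonteStrat → ℝ) (hsum : ∑ M : MonteStrat, Q M = 1) (x : Door) :
    winProb (x, true, true) Q = 1 - prizeProb Q x := by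
  have : winProb (x, true, true) Q
      = ∑ M : MonteStrat, (Q M - if M.val.1 = x then Q M else 0) := by
    unfold winProb
    apply Finset.sum_congr rfl
    intro M _
    rcases eq_or_ne x M.val.1 with h | h
    · simp [payoff, wins, act, h]
    · simp [payoff, wins, act, h, Ne.symm h]
  rw [this, Finset.sum_sub_distrib, hsum]
  rfl

lemma winProb_le_one (Q : MonteStrat → ℝ) (hQ : ∀ M, 0 ≤ Q M)
    (hsum : ∑ M : MonteStrat, Q M = 1) (B : ConieStrat) : winProb B Q ≤ 1 := by
  calc winProb B Q ≤ ∑ M : MonteStrat, Q M := by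
        apply Finset.sum_le_sum
        intro M _
        have : payoff B M ≤ 1 := by unfold payoff; split <;> norm_num
        nlinarith [hQ M]
    _ = 1 := hsum

/-- a never-switching strategy (x, hold, hold) is a best response
to Q iff Q puts the prize behind door x with probability 1; and even then every
always-switching strategy with a different pick is also a best response. -/
theorem stmt19 (Q : MonteStrat → ℝ) (hQ : ∀ M, 0 ≤ Q M)
    (hsum : ∑ M : MonteStrat, Q M = 1) (x : Door) :
    ((∀ B : ConieStrat, winProb B Q ≤ winProb (x, false, false) Q) ↔ prizeProb Q x = 1) ∧
    (prizeProb Q x = 1 → ∀ x' : Door, x' ≠ x →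
      ∀ B : ConieStrat, winProb B Q ≤ winProb (x', true, true) Q) := by
  have hp := prizeProb_nonneg Q hQ
  have hsum3 := sum_prizeProb Q hsum
  have hle := winProb_le_one Q hQ hsum
  have hs : prizeProb Q 0 + prizeProb Q 1 + prizeProb Q 2 = 1 := by
    rw [← hsum3, Fin.sum_univ_three]
  constructor
  · constructor
    · intro hbest
      have h1 := hbest (smallerAlt x, true, true)
      have h2 := hbest (largerAlt x, true, true)
      rw [winProb_switch Q hsum, winProb_hold] at h1
      rw [winProb_switch Q hsum, winProb_hold] at h2
      fin_cases x <;> simp [smallerAlt, largerAlt] at h1 h2 ⊢ <;> linarith [hp 0, hp 1, hp 2]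
    · intro h1 B
      rw [winProb_hold, h1]
      exact hle B
  · intro h1 x' hne B
    have h0 : prizeProb Q x' = 0 := by
      fin_cases x <;> fin_cases x' <;> simp_all <;> linarith [hp 0, hp 1, hp 2]
    rw [winProb_switch Q hsum, h0]
    simpa using hle B
end
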